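/- In the enhanced conflict graph G_{K,N} of a K×N switch with all unicasts and one broadcast per input, the subgraph induced by the unicast vertices to a single output i together with all broadcast subflow vertices (to all outputs) is perfect. -/

import Mathlib

open Pointwise

/-- Vertices of the enhanced conflict graph of a `K × N` switch loaded with all
unicasts and one broadcast per input: `u i j` is the unicast subflow from input
`i` to output `j`, and `b i j` is the broadcast subflow from input `i` to
output `j`. -/
inductive SwitchVertex (K N : ℕ) where
  | u : Fin K → Fin N → SwitchVertex K N
  | b : Fin K → Fin N → SwitchVertex K N
deriving DecidableEq

namespace SwitchVertex

variable {K N : ℕ}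

/-- The input of a subflow. -/
def inp : SwitchVertex K N → Fin K
  | u i _ => i
  | b i _ => i

/-- The output of a subflow. -/
def out : SwitchVertex K N → Fin N
  | u _ j => j
  | b _ j => j

/-- Whether a subflow is a broadcast subflow. -/
def isBroadcast : SwitchVertex K N → Prop
  | u _ _ => False
  | b _ _ => True

end SwitchVertex

/-- The enhanced conflict graph `G_{K,N}`: two distinct subflows conflict iff they
share the output, or they share the input and are not both broadcast subflows
(broadcast subflows from the same input belong to the same flow, hence do not
conflict). -/
def GKN (K N : ℕ) : SimpleGraph (SwitchVertex K N) where
  Adj a b := a ≠ b ∧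
    (a.out = b.out ∨ (a.inp = b.inp ∧ ¬ (a.isBroadcast ∧ b.isBroadcast)))
  symm := by
    constructor
    rintro a b ⟨hne, h | ⟨h1, h2⟩⟩
    · exact ⟨hne.symm, Or.inl h.symm⟩
    · exact ⟨hne.symm, Or.inr ⟨h1.symm, fun hh => h2 ⟨hh.2, hh.1⟩⟩⟩
  loopless := by constructor; rintro a ⟨hne, _⟩; exact hne rfl

/-- A graph is perfect if for every induced subgraph the chromatic number equals
the clique number. -/
def SimpleGraph.IsPerfect {V : Type*} (G : SimpleGraph V) : Prop :=
  ∀ s : Set V, (G.induce s).chromaticNumber = ((G.induce s).cliqueNum : ℕ∞)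

open Finset

/-! Group the vertices by output. Each output class is a clique, and an edge between two classes
joins a broadcast `b k j` with `j ≠ i` to the unicast `u k i`; so all edges between classes meet
the output-`i` class and, towards any other class, form a matching. Every graph of this shape is
colourable with as many colours as its clique number: colour the output-`i` class injectively, give
each matched vertex of another class the colour of its partner shifted by a fixed-point-free
permutation, and extend injectively to the rest of the class. The shape passes to induced subgraphs,
hence perfection. -/

theorem exists_injective_extend_of_card_le {α β : Type*} [Fintype α] [Fintype β]
    (hcard : Fintype.card α ≤ Fintype.card β) (R : α → β → Prop)
    (hR : ∀ ⦃a b b'⦄, R a b → R a b' → b = b') (hR' : ∀ ⦃a a' b⦄, R a b → R a' b → a = a') :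
    ∃ g : α → β, Function.Injective g ∧ ∀ ⦃a b⦄, R a b → g a = b := by
  classical
  rcases isEmpty_or_nonempty β with hβ | ⟨⟨b₀⟩⟩
  · have : IsEmpty α := Fintype.card_eq_zero_iff.mp (by simpa using hcard)
    exact ⟨isEmptyElim, fun a => isEmptyElim a, fun a => isEmptyElim a⟩
  let f a := if h : ∃ b, R a b then h.choose else b₀
  have hf : ∀ ⦃a b⦄, R a b → f a = b := fun a b hab => by
    have h : ∃ b, R a b := ⟨b, hab⟩
    simpa only [f, dif_pos h] using hR h.choose_spec hab
  let s := univ.filter fun a => ∃ b, R a b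
  have hinj : Set.InjOn f s := by
    rintro a ha a' ha' h
    obtain ⟨b, hab⟩ := (mem_filter.mp ha).2
    obtain ⟨b', hab'⟩ := (mem_filter.mp ha').2
    rw [hf hab, hf hab'] at h
    exact hR' hab (h ▸ hab')
  obtain ⟨t, hst, -, ht⟩ := exists_subsuperset_card_eq (subset_univ (s.image f))
    (card_image_le.trans (card_le_univ s)) (by rwa [card_univ])
  obtain ⟨G, hG⟩ := Set.MapsTo.exists_equiv_extend_of_card_eq ht.symm
    (fun a ha => hst (mem_image_of_mem f ha)) hinj
  exact ⟨fun a => G a, Subtype.val_injective.comp G.injective,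
    fun a b hab => (hG a (mem_filter.mpr ⟨mem_univ a, b, hab⟩)).trans (hf hab)⟩

theorem finRotate_apply_ne {n : ℕ} (hn : 2 ≤ n) (k : Fin n) : finRotate n k ≠ k :=
  Equiv.Perm.mem_support.mp (support_finRotate_of_le hn ▸ mem_univ k)

namespace SimpleGraph

variable {V ι : Type*} {G : SimpleGraph V}

theorem two_le_cliqueNum_of_adj [Finite V] {a b : V} (hab : G.Adj a b) : 2 ≤ G.cliqueNum := by
  classical
  simpa [card_pair hab.ne] using IsClique.card_le_cliqueNum (G := G) (t := {a, b})
    (tc := by rw [coe_pair]; exact isClique_pair.mpr fun _ => hab)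

/-- For `G^o_{1,i}`, `p` is the output, `hub = i`, and the fibres are `U^o_i ∪ B^o_i` and the
`B^o_j`, `j ≠ i`. -/
structure IsMatchedCliqueStar (G : SimpleGraph V) (p : V → ι) (hub : ι) : Prop where
  adj_of_eq : ∀ ⦃a b⦄, a ≠ b → p a = p b → G.Adj a b
  eq_hub_of_adj : ∀ ⦃a b⦄, G.Adj a b → p a ≠ p b → p a = hub ∨ p b = hub
  hub_neighbor_unique : ∀ ⦃a x y⦄, p a ≠ hub → p x = hub → p y = hub →
    G.Adj a x → G.Adj a y → x = y
  hub_neighbor_injective : ∀ ⦃a b x⦄, p a = p b → p a ≠ hub → p x = hub →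
    G.Adj a x → G.Adj b x → a = b

namespace IsMatchedCliqueStar

variable {p : V → ι} {hub : ι}

theorem induce (h : G.IsMatchedCliqueStar p hub) (s : Set V) :
    (G.induce s).IsMatchedCliqueStar (p ∘ (↑)) hub where
  adj_of_eq _ _ hab := h.adj_of_eq (Subtype.coe_injective.ne hab)
  eq_hub_of_adj _ _ hab := h.eq_hub_of_adj hab
  hub_neighbor_unique _ _ _ ha hx hy hax hay := Subtype.ext (h.hub_neighbor_unique ha hx hy hax hay)
  hub_neighbor_injective _ _ _ hab ha hx hax hbx := Subtype.ext (h.hub_neighbor_injective hab ha hx hax hbx)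

theorem card_fiber_le_cliqueNum [Fintype V] [DecidableEq ι] (h : G.IsMatchedCliqueStar p hub)
    (j : ι) : Fintype.card {v // p v = j} ≤ G.cliqueNum := by
  rw [Fintype.card_subtype]
  refine IsClique.card_le_cliqueNum (tc := ?_)
  intro a ha b hb hab
  simp only [coe_filter, mem_univ, true_and, Set.mem_ofPred_eq] at ha hb
  exact h.adj_of_eq hab (ha.trans hb.symm)

theorem colorable_cliqueNum [Finite V] (h : G.IsMatchedCliqueStar p hub) :
    G.Colorable G.cliqueNum := by
  classical
  have := Fintype.ofFinite V
  obtain ⟨φ⟩ := Function.Embedding.nonempty_of_card_le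
    ((h.card_fiber_le_cliqueNum hub).trans (Fintype.card_fin _).ge)
  -- The hub edges at a fibre form a matching, so `φ` pulls back to a partial injection on it.
  have hfiber : ∀ j, j ≠ hub → ∃ ψ : {v // p v = j} → Fin G.cliqueNum, Function.Injective ψ ∧
      ∀ (a : {v // p v = j}) (x : {v // p v = hub}), G.Adj a x → ψ a = φ x := by
    intro j hj
    obtain ⟨ψ, hψ, hψφ⟩ := exists_injective_extend_of_card_le
      ((h.card_fiber_le_cliqueNum j).trans (Fintype.card_fin _).ge)
      (fun a c => ∃ x : {v // p v = hub}, G.Adj a x ∧ φ x = c)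
      (by
        rintro a _ _ ⟨x, hax, rfl⟩ ⟨y, hay, rfl⟩
        rw [Subtype.ext (h.hub_neighbor_unique (a.2.trans_ne hj) x.2 y.2 hax hay)])
      (by
        rintro a b _ ⟨x, hax, rfl⟩ ⟨y, hby, hxy⟩
        obtain rfl := φ.injective hxy
        exact Subtype.ext (h.hub_neighbor_injective (a.2.trans b.2.symm) (a.2.trans_ne hj) y.2 hax hby))
    exact ⟨ψ, hψ, fun a x hax => hψφ ⟨x, hax, rfl⟩⟩
  choose ψ hψ hψφ using hfiber
  -- A fixed-point-free rotation keeps each vertex off the colour of its hub neighbour.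
  let C : V → Fin G.cliqueNum := fun v =>
    if hv : p v = hub then φ ⟨v, hv⟩ else finRotate _ (ψ (p v) hv ⟨v, rfl⟩)
  have hC : ∀ j (hj : j ≠ hub) v (hv : p v = j), C v = finRotate _ (ψ j hj ⟨v, hv⟩) := by
    rintro j hj v rfl
    simp only [C, dif_neg hj]
  have hC_hub : ∀ v (hv : p v = hub), C v = φ ⟨v, hv⟩ := fun v hv => by simp only [C, dif_pos hv]
  have hC_ne : ∀ a x, p a ≠ hub → p x = hub → G.Adj a x → C a ≠ C x := by
    intro a x ha hx hax
    rw [hC _ ha a rfl, hC_hub x hx, hψφ _ ha ⟨a, rfl⟩ ⟨x, hx⟩ hax]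
    exact finRotate_apply_ne (two_le_cliqueNum_of_adj hax) _
  refine ⟨Coloring.mk C fun {a b} hab hCab => ?_⟩
  by_cases hpab : p a = p b
  · by_cases ha : p a = hub
    · rw [hC_hub a ha, hC_hub b (hpab ▸ ha)] at hCab
      exact hab.ne (congrArg Subtype.val (φ.injective hCab))
    · rw [hC _ ha a rfl, hC _ ha b hpab.symm] at hCab
      exact hab.ne (congrArg Subtype.val ((hψ _ ha) ((finRotate _).injective hCab)))
  · rcases h.eq_hub_of_adj hab hpab with ha | hb
    · exact hC_ne b a (fun hb => hpab (ha.trans hb.symm)) ha hab.symm hCab.symm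
    · exact hC_ne a b (fun ha => hpab (ha.trans hb.symm)) hb hab hCab

theorem isPerfect [Finite V] (h : G.IsMatchedCliqueStar p hub) : G.IsPerfect := fun s =>
  le_antisymm (h.induce s).colorable_cliqueNum.chromaticNumber_le
    (G.induce s).cliqueNum_le_chromaticNumber

end IsMatchedCliqueStar

end SimpleGraph

namespace SwitchVertex

variable {K N : ℕ}

instance : Finite (SwitchVertex K N) :=
  Finite.of_surjective
    (fun x : (Fin K × Fin N) ⊕ (Fin K × Fin N) =>
      x.elim (fun kj => u kj.1 kj.2) fun kj => b kj.1 kj.2)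
    (by rintro (⟨k, j⟩ | ⟨k, j⟩); exacts [⟨.inl (k, j), rfl⟩, ⟨.inr (k, j), rfl⟩])

theorem eq_u_of_adj {a x : SwitchVertex K N} (ha : a.isBroadcast) (hout : a.out ≠ x.out)
    (hax : (GKN K N).Adj a x) : x = u a.inp x.out := by
  obtain ⟨-, hout' | ⟨hinp, hnb⟩⟩ := hax
  · exact absurd hout' hout
  cases x with
  | u k j => rw [hinp]; rfl
  | b k j => exact absurd ⟨ha, trivial⟩ hnb

theorem eq_of_isBroadcast {a b : SwitchVertex K N} (ha : a.isBroadcast) (hb : b.isBroadcast)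
    (hinp : a.inp = b.inp) (hout : a.out = b.out) : a = b := by
  cases a <;> cases b <;> first | exact ha.elim | exact hb.elim | exact congrArg₂ _ hinp hout

theorem isMatchedCliqueStar_induce (i : Fin N) :
    ((GKN K N).induce {v : SwitchVertex K N | v.isBroadcast ∨ (¬ v.isBroadcast ∧ v.out = i)}
      ).IsMatchedCliqueStar (fun v => v.1.out) i := by
  have isBroadcast_of_ne {v : SwitchVertex K N} (hv : v.isBroadcast ∨ (¬ v.isBroadcast ∧ v.out = i))
      (hvi : v.out ≠ i) : v.isBroadcast := hv.resolve_right fun h => hvi h.2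
  have hub_nbr {a x : SwitchVertex K N} (ha : a.isBroadcast ∨ (¬ a.isBroadcast ∧ a.out = i))
      (hai : a.out ≠ i) (hx : x.out = i) (hax : (GKN K N).Adj a x) : x = u a.inp i := by
    rw [← hx]
    exact eq_u_of_adj (isBroadcast_of_ne ha hai) (fun h => hai (h.trans hx)) hax
  refine ⟨fun a b hab h => ⟨Subtype.coe_injective.ne hab, Or.inl h⟩, ?_, ?_, ?_⟩
  · rintro ⟨a, ha⟩ ⟨b, hb⟩ ⟨-, hout | ⟨-, hnb⟩⟩ hne
    · exact absurd hout hne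
    · simp only [Set.mem_ofPred_eq, Function.Embedding.subtype_apply] at ha hb hnb
      tauto
  · rintro ⟨a, ha⟩ ⟨x, _⟩ ⟨y, _⟩ hai hx hy hax hay
    exact Subtype.ext ((hub_nbr ha hai hx hax).trans (hub_nbr ha hai hy hay).symm)
  · rintro ⟨a, ha⟩ ⟨b, hb⟩ ⟨x, _⟩ hab hai hx hax hbx
    have hbi : b.out ≠ i := fun h => hai (hab.trans h)
    exact Subtype.ext (eq_of_isBroadcast (isBroadcast_of_ne ha hai) (isBroadcast_of_ne hb hbi)
      (u.inj ((hub_nbr ha hai hx hax).symm.trans (hub_nbr hb hbi hx hbx))).1 hab)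

end SwitchVertex

/-- The subgraph of `G_{K,N}` induced by the unicast vertices to a single output
`i` together with all broadcast subflow vertices is perfect. -/
theorem stmt8 (K N : ℕ) (i : Fin N) :
    ((GKN K N).induce
      {v : SwitchVertex K N | v.isBroadcast ∨ (¬ v.isBroadcast ∧ v.out = i)}).IsPerfect := by
  exact (SwitchVertex.isMatchedCliqueStar_induce i).isPerfect
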